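/- arXiv:2502.07300 — 2 statements merged into one kernel-verified Lean document; each statement's English description precedes it below -/
import Mathlib

section
/- Let p, q ≥ 1, N = p + q, let (t_i, a_i)_{i=1}^r be a good parameter satisfying the nonvanishing condition with q_j ≥ 1, and let λ ∈ ℤ^N be dominant, satisfying the matching condition ν = P ⊔ Q and the inequality min{N − p', N − q'} ≤ λ_p − λ_{p+1}. Then I ⊆ ν_j. -/
open Finset

/-- The multiset `P(λ) = {λ_i − (N−1)/2 + (p−i) : 1 ≤ i ≤ p}` of rationals,
for `N = p + q` and a weight `λ : ℕ → ℤ` (1-based indexing). -/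
def Pms (p q : ℕ) (lam : ℕ → ℤ) : Multiset ℚ :=
  (Finset.Icc 1 p).val.map
    (fun i => (lam i : ℚ) - ((p : ℚ) + (q : ℚ) - 1) / 2 + ((p : ℚ) - (i : ℚ)))

/-- The multiset `Q(λ) = {λ_{p+i} + (N−1)/2 − (i−1) : 1 ≤ i ≤ q}`. -/
def Qms (p q : ℕ) (lam : ℕ → ℤ) : Multiset ℚ :=
  (Finset.Icc 1 q).val.map
    (fun i => (lam (p + i) : ℚ) + ((p : ℚ) + (q : ℚ) - 1) / 2 - ((i : ℚ) - 1))

/-- Dominance: `λ_1 ≥ … ≥ λ_p` and `λ_{p+1} ≥ … ≥ λ_{p+q}`. -/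
def Dominant (p q : ℕ) (lam : ℕ → ℤ) : Prop :=
  (∀ i, 1 ≤ i → i < p → lam (i + 1) ≤ lam i) ∧
  (∀ i, p + 1 ≤ i → i < p + q → lam (i + 1) ≤ lam i)

/-- `p' = #{i : 1 ≤ i ≤ p, λ_i = λ_p}`. -/
def pPrime (p : ℕ) (lam : ℕ → ℤ) : ℕ :=
  ((Finset.Icc 1 p).filter (fun i => lam i = lam p)).card

/-- `q' = #{i : p+1 ≤ i ≤ p+q, λ_i = λ_{p+1}}`. -/
def qPrime (p q : ℕ) (lam : ℕ → ℤ) : ℕ :=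
  ((Finset.Icc (p + 1) (p + q)).filter (fun i => lam i = lam (p + 1))).card

/-- The segment `P' = {λ_p − (N−1)/2 + k : 0 ≤ k ≤ p'−1}`. -/
def Pseg (p q : ℕ) (lam : ℕ → ℤ) : Finset ℚ :=
  (Finset.range (pPrime p lam)).image
    (fun k : ℕ => (lam p : ℚ) - ((p : ℚ) + (q : ℚ) - 1) / 2 + (k : ℚ))

/-- The segment `Q' = {λ_{p+1} + (N−1)/2 − k : 0 ≤ k ≤ q'−1}`. -/
def Qseg (p q : ℕ) (lam : ℕ → ℤ) : Finset ℚ :=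
  (Finset.range (qPrime p q lam)).image
    (fun k : ℕ => (lam (p + 1) : ℚ) + ((p : ℚ) + (q : ℚ) - 1) / 2 - (k : ℚ))

/-- `I = P' ∩ Q'`. -/
def Iseg (p q : ℕ) (lam : ℕ → ℤ) : Finset ℚ := Pseg p q lam ∩ Qseg p q lam

/-- A good parameter `(t_1,a_1),…,(t_r,a_r)` for `U(p,q)` (1-based indexing). -/
structure GoodParam (p q r : ℕ) (t : ℕ → ℤ) (a : ℕ → ℕ) : Prop where
  hr : 1 ≤ r
  hpos : ∀ i ∈ Finset.Icc 1 r, 0 < a i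
  hsum : ∑ i ∈ Finset.Icc 1 r, a i = p + q
  heven : ∀ i ∈ Finset.Icc 1 r, Even (t i + (a i : ℤ) + (p : ℤ) + (q : ℤ))
  hdec : ∀ i, 1 ≤ i → i < r → t (i + 1) ≤ t i
  hadec : ∀ i, 1 ≤ i → i < r → t i = t (i + 1) → a (i + 1) ≤ a i

/-- The segment `ν_i = {(t_i − a_i + 1)/2 + k : 0 ≤ k ≤ a_i − 1}` as a multiset of rationals. -/
def nu (t : ℕ → ℤ) (a : ℕ → ℕ) (i : ℕ) : Multiset ℚ :=
  (Multiset.range (a i)).map (fun k => ((t i : ℚ) - (a i : ℚ) + 1) / 2 + (k : ℚ))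

/-- `ν_{<j} = ν_1 ⊔ … ⊔ ν_{j−1}`. -/
def nuLt (t : ℕ → ℤ) (a : ℕ → ℕ) (j : ℕ) : Multiset ℚ :=
  ∑ k ∈ Finset.Icc 1 (j - 1), nu t a k

/-- `ν_{>j} = ν_{j+1} ⊔ … ⊔ ν_r`. -/
def nuGt (t : ℕ → ℤ) (a : ℕ → ℕ) (r j : ℕ) : Multiset ℚ :=
  ∑ k ∈ Finset.Icc (j + 1) r, nu t a k

/-- `ν = ν_1 ⊔ … ⊔ ν_r`. -/
def nuAll (t : ℕ → ℤ) (a : ℕ → ℕ) (r : ℕ) : Multiset ℚ :=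
  ∑ k ∈ Finset.Icc 1 r, nu t a k

/-- `j` is the least index with `a_1 + … + a_j ≥ p`. -/
structure LeastJ (p r : ℕ) (a : ℕ → ℕ) (j : ℕ) : Prop where
  h1 : 1 ≤ j
  hle : j ≤ r
  hge : p ≤ ∑ ℓ ∈ Finset.Icc 1 j, a ℓ
  hmin : ∀ i, i < j → ∑ ℓ ∈ Finset.Icc 1 i, a ℓ < p

/-- `p_j = p − (a_1 + … + a_{j−1})`. -/
def pj (p : ℕ) (a : ℕ → ℕ) (j : ℕ) : ℕ := p - ∑ ℓ ∈ Finset.Icc 1 (j - 1), a ℓ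

/-- `q_j = q − (a_{j+1} + … + a_r)`. -/
def qj (q r : ℕ) (a : ℕ → ℕ) (j : ℕ) : ℕ := q - ∑ ℓ ∈ Finset.Icc (j + 1) r, a ℓ

/-- The nonvanishing condition: `ν_{<j}` and `ν_{>j}` are multiplicity free,
`#(ν_j ∩ ν_{<j}) ≤ q_j` and `#(ν_j ∩ ν_{>j}) ≤ p_j`. -/
def NonVanishing (p q r : ℕ) (t : ℕ → ℤ) (a : ℕ → ℕ) (j : ℕ) : Prop :=
  (nuLt t a j).Nodup ∧ (nuGt t a r j).Nodup ∧
  Multiset.card ((nu t a j).filter (fun x => x ∈ nuLt t a j)) ≤ qj q r a j ∧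
  Multiset.card ((nu t a j).filter (fun x => x ∈ nuGt t a r j)) ≤ pj p a j

private lemma step_mono (f : ℕ → ℤ) (a b : ℕ)
    (h : ∀ m, a ≤ m → m < b → f (m + 1) ≤ f m) :
    ∀ i i', a ≤ i → i ≤ i' → i' ≤ b → f i' ≤ f i := by
  intro i i' hai hii' hi'b
  induction i', hii' using Nat.le_induction with
  | base => exact le_rfl
  | succ n hn ih =>
    exact le_trans (h n (le_trans hai hn) (by omega)) (ih (by omega))

private lemma nu_eq (t : ℕ → ℤ) (a : ℕ → ℕ) (i : ℕ) :
    nu t a i =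
      (Multiset.range (a i)).map (fun k : ℕ => ((t i : ℚ) - (a i : ℚ) + 1) / 2 + (k : ℚ)) := by
  simp [nu]

private lemma mem_nu_iff (t : ℕ → ℤ) (a : ℕ → ℕ) (i : ℕ) (x : ℚ) :
    x ∈ nu t a i ↔
      ∃ m : ℕ, m < a i ∧ (2 : ℚ) * x = ((t i - (a i : ℤ) + 1 + 2 * m : ℤ) : ℚ) := by
  rw [nu_eq]
  constructor
  · intro hx
    obtain ⟨m, hm, hfx⟩ := Multiset.mem_map.mp hx
    rw [Multiset.mem_range] at hm
    exact ⟨m, hm, by rw [← hfx]; push_cast; ring⟩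
  · rintro ⟨m, hm, hx⟩
    refine Multiset.mem_map.mpr ⟨m, Multiset.mem_range.mpr hm, ?_⟩
    push_cast at hx
    linarith

private lemma nu_mono (t : ℕ → ℤ) (a : ℕ → ℕ) (i k : ℕ)
    (h1 : (t k : ℤ) - a k ≤ t i - a i) (h2 : (t i : ℤ) + a i ≤ t k + a k)
    (hpar : ∃ f : ℤ, (t i - a i) - ((t k : ℤ) - a k) = 2 * f) :
    ∀ y ∈ nu t a i, y ∈ nu t a k := by
  intro y hy
  rw [mem_nu_iff] at hy ⊢
  obtain ⟨m, hm, hy⟩ := hy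
  obtain ⟨f, hf⟩ := hpar
  refine ⟨m + f.toNat, by omega, ?_⟩
  rw [hy]
  exact congrArg _ (by push_cast; omega)

private lemma nuAll_decomp (t : ℕ → ℤ) (a : ℕ → ℕ) (r j : ℕ) (h1 : 1 ≤ j) (h2 : j ≤ r) :
    nuAll t a r = nuLt t a j + nu t a j + nuGt t a r j := by
  unfold nuAll nuLt nuGt
  have e1 : Finset.Icc 1 (j - 1) = Finset.Ioc 0 (j - 1) := by
    ext i; simp [Finset.mem_Icc, Finset.mem_Ioc]; omega
  have e2 : Finset.Icc (j + 1) r = Finset.Ioc j r := by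
    ext i; simp [Finset.mem_Icc, Finset.mem_Ioc]
  have e3 : Finset.Icc 1 r = Finset.Ioc 0 r := by
    ext i; simp [Finset.mem_Icc, Finset.mem_Ioc]; omega
  have e4 : nu t a j = ∑ k ∈ Finset.Ioc (j - 1) j, nu t a k := by
    have : Finset.Ioc (j - 1) j = {j} := by
      ext i; simp [Finset.mem_Ioc]; omega
    rw [this, Finset.sum_singleton]
  rw [e1, e2, e3, e4,
    Finset.sum_Ioc_consecutive _ (by omega : (0 : ℕ) ≤ j - 1) (by omega : j - 1 ≤ j),
    Finset.sum_Ioc_consecutive _ (by omega : (0 : ℕ) ≤ j) h2]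

private lemma sum_split_left (a : ℕ → ℕ) (j : ℕ) (h1 : 1 ≤ j) :
    ∑ ℓ ∈ Finset.Icc 1 j, a ℓ = (∑ ℓ ∈ Finset.Icc 1 (j - 1), a ℓ) + a j := by
  have e1 : Finset.Icc 1 (j - 1) = Finset.Ioc 0 (j - 1) := by
    ext i; simp [Finset.mem_Icc, Finset.mem_Ioc]; omega
  have e3 : Finset.Icc 1 j = Finset.Ioc 0 j := by
    ext i; simp [Finset.mem_Icc, Finset.mem_Ioc]; omega
  have e4 : Finset.Ioc (j - 1) j = {j} := by
    ext i; simp [Finset.mem_Ioc]; omega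
  rw [e1, e3, ← Finset.sum_Ioc_consecutive _ (by omega : (0 : ℕ) ≤ j - 1) (by omega : j - 1 ≤ j),
    e4, Finset.sum_singleton]

private lemma sum_split_right (a : ℕ → ℕ) (r j : ℕ) (h1 : 1 ≤ j) (h2 : j ≤ r) :
    ∑ ℓ ∈ Finset.Icc 1 r, a ℓ = (∑ ℓ ∈ Finset.Icc 1 j, a ℓ) + ∑ ℓ ∈ Finset.Icc (j + 1) r, a ℓ := by
  have e2 : Finset.Icc (j + 1) r = Finset.Ioc j r := by
    ext i; simp [Finset.mem_Icc, Finset.mem_Ioc]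
  have e3 : Finset.Icc 1 r = Finset.Ioc 0 r := by
    ext i; simp [Finset.mem_Icc, Finset.mem_Ioc]; omega
  have e4 : Finset.Icc 1 j = Finset.Ioc 0 j := by
    ext i; simp [Finset.mem_Icc, Finset.mem_Ioc]; omega
  rw [e2, e3, e4, Finset.sum_Ioc_consecutive _ (by omega : (0 : ℕ) ≤ j) h2]

/-- under nonvanishing with `q_j ≥ 1`, matching, and
`min{N−p', N−q'} ≤ λ_p − λ_{p+1}`, one has `I ⊆ ν_j`. -/
theorem statement12 (p q r j : ℕ) (hp : 1 ≤ p) (hq : 1 ≤ q) (t : ℕ → ℤ) (a : ℕ → ℕ)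
    (hgp : GoodParam p q r t a) (hj : LeastJ p r a j)
    (hnv : NonVanishing p q r t a j) (hqj : 1 ≤ qj q r a j)
    (lam : ℕ → ℤ) (hdom : Dominant p q lam)
    (hmatch : nuAll t a r = Pms p q lam + Qms p q lam)
    (hineq : ((min (p + q - pPrime p lam) (p + q - qPrime p q lam) : ℕ) : ℤ) ≤
      lam p - lam (p + 1)) :
    ∀ x ∈ Iseg p q lam, x ∈ nu t a j := by
  classical
  intro x hx
  rw [Iseg, Finset.mem_inter] at hx
  obtain ⟨hxP, hxQ⟩ := hx
  simp only [Pseg, Finset.mem_image, Finset.mem_range] at hxP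
  obtain ⟨kp, hkp, hxPe⟩ := hxP
  simp only [Qseg, Finset.mem_image, Finset.mem_range] at hxQ
  obtain ⟨kq, hkq, hxQe⟩ := hxQ
  have hp' : pPrime p lam ≤ p := by
    have h1 := Finset.card_filter_le (Finset.Icc 1 p) (fun i => lam i = lam p)
    rw [Nat.card_Icc] at h1
    unfold pPrime
    omega
  have hq' : qPrime p q lam ≤ q := by
    have h1 := Finset.card_filter_le (Finset.Icc (p + 1) (p + q)) (fun i => lam i = lam (p + 1))
    rw [Nat.card_Icc] at h1
    unfold qPrime
    omega
  have hmono1 : ∀ i i', 1 ≤ i → i ≤ i' → i' ≤ p → lam i' ≤ lam i :=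
    step_mono lam 1 p hdom.1
  have hmono2 : ∀ i i', p + 1 ≤ i → i ≤ i' → i' ≤ p + q → lam i' ≤ lam i :=
    step_mono lam (p + 1) (p + q) hdom.2
  have hA : lam (p - kp) = lam p := by
    by_contra hne
    have hgt : lam p < lam (p - kp) :=
      lt_of_le_of_ne (hmono1 (p - kp) p (by omega) (by omega) le_rfl)
        (fun h => hne h.symm)
    have hsub : (Finset.Icc 1 p).filter (fun i => lam i = lam p) ⊆
        Finset.Icc (p - kp + 1) p := by
      intro i hi
      rw [Finset.mem_filter, Finset.mem_Icc] at hi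
      rw [Finset.mem_Icc]
      refine ⟨?_, hi.1.2⟩
      by_contra hlt
      push_neg at hlt
      have := hmono1 i (p - kp) hi.1.1 (by omega) (by omega)
      omega
    have hcard := Finset.card_le_card hsub
    rw [Nat.card_Icc] at hcard
    unfold pPrime at hkp
    omega
  have hB : lam (p + kq + 1) = lam (p + 1) := by
    by_contra hne
    have hgt : lam (p + kq + 1) < lam (p + 1) :=
      lt_of_le_of_ne (hmono2 (p + 1) (p + kq + 1) le_rfl (by omega) (by omega)) hne
    have hsub : (Finset.Icc (p + 1) (p + q)).filter (fun i => lam i = lam (p + 1)) ⊆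
        Finset.Icc (p + 1) (p + kq) := by
      intro i hi
      rw [Finset.mem_filter, Finset.mem_Icc] at hi
      rw [Finset.mem_Icc]
      refine ⟨hi.1.1, ?_⟩
      by_contra hgt2
      push_neg at hgt2
      have := hmono2 (p + kq + 1) i (by omega) (by omega) hi.1.2
      omega
    have hcard := Finset.card_le_card hsub
    rw [Nat.card_Icc] at hcard
    unfold qPrime at hkq
    omega
  have hxPms : x ∈ Pms p q lam := by
    rw [Pms, Multiset.mem_map]
    refine ⟨p - kp, by rw [Finset.mem_val, Finset.mem_Icc]; omega, ?_⟩
    rw [hA, ← hxPe]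
    push_cast [Nat.cast_sub (show kp ≤ p by omega)]
    ring
  have hxQms : x ∈ Qms p q lam := by
    rw [Qms, Multiset.mem_map]
    refine ⟨kq + 1, by rw [Finset.mem_val, Finset.mem_Icc]; omega, ?_⟩
    have hadd : p + (kq + 1) = p + kq + 1 := by ring
    rw [hadd, hB, ← hxQe]
    push_cast
    ring
  have h2 : 2 ≤ Multiset.count x (nuAll t a r) := by
    rw [hmatch, Multiset.count_add]
    have c1 : 0 < Multiset.count x (Pms p q lam) := Multiset.count_pos.mpr hxPms
    have c2 : 0 < Multiset.count x (Qms p q lam) := Multiset.count_pos.mpr hxQms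
    omega
  by_contra hxj
  rw [nuAll_decomp t a r j hj.h1 hj.hle, Multiset.count_add, Multiset.count_add] at h2
  have hcj : Multiset.count x (nu t a j) = 0 := Multiset.count_eq_zero.mpr hxj
  have hlt1 : Multiset.count x (nuLt t a j) ≤ 1 :=
    Multiset.nodup_iff_count_le_one.mp hnv.1 x
  have hgt1 : Multiset.count x (nuGt t a r j) ≤ 1 :=
    Multiset.nodup_iff_count_le_one.mp hnv.2.1 x
  have hmemLt : x ∈ nuLt t a j := Multiset.count_pos.mp (by omega)
  have hmemGt : x ∈ nuGt t a r j := Multiset.count_pos.mp (by omega)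
  simp only [nuLt, Multiset.mem_sum] at hmemLt
  obtain ⟨k', hk'mem, hk'⟩ := hmemLt
  rw [Finset.mem_Icc] at hk'mem
  simp only [nuGt, Multiset.mem_sum] at hmemGt
  obtain ⟨k, hkmem, hk⟩ := hmemGt
  rw [Finset.mem_Icc] at hkmem
  have htmono : ∀ i i', 1 ≤ i → i ≤ i' → i' ≤ r → t i' ≤ t i :=
    step_mono t 1 r hgp.hdec
  have htk : t k ≤ t j := htmono j k hj.h1 (by omega) (by omega)
  have htk' : t j ≤ t k' := htmono k' j hk'mem.1 (by omega) hj.hle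
  obtain ⟨uj, huj⟩ := hgp.heven j (Finset.mem_Icc.mpr ⟨hj.h1, hj.hle⟩)
  obtain ⟨uk, huk⟩ := hgp.heven k (Finset.mem_Icc.mpr ⟨by omega, hkmem.2⟩)
  obtain ⟨uk', huk'⟩ := hgp.heven k' (Finset.mem_Icc.mpr ⟨hk'mem.1, by omega⟩)
  rw [mem_nu_iff] at hk hk'
  obtain ⟨mk, hmk, ek⟩ := hk
  obtain ⟨mk', hmk', ek'⟩ := hk'
  rw [mem_nu_iff] at hxj
  push_neg at hxj
  -- the sizes p_j and q_j
  have hSlt : ∑ ℓ ∈ Finset.Icc 1 (j - 1), a ℓ < p := hj.hmin (j - 1) (by omega)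
  have hsplit1 := sum_split_left a j hj.h1
  have hsplit2 := sum_split_right a r j hj.h1 hj.hle
  have hsum := hgp.hsum
  have hge := hj.hge
  have hpj : 1 ≤ pj p a j := by unfold pj; omega
  have hpjqj : pj p a j + qj q r a j = a j := by unfold pj qj; omega
  have hcardnj : Multiset.card (nu t a j) = a j := by
    rw [nu_eq, Multiset.card_map, Multiset.card_range]
  -- key case split
  set e : ℤ := uj - uk - (a j : ℤ) + (a k : ℤ) with he_def
  have he : (t j : ℤ) - a j = (t k : ℤ) - a k + 2 * e := by
    rw [he_def]; omega
  have hkey : (mk : ℤ) - e < 0 ∨ (a j : ℤ) ≤ (mk : ℤ) - e := by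
    by_contra hcon
    push_neg at hcon
    refine hxj ((mk : ℤ) - e).toNat (by omega) ?_
    rw [ek]
    exact congrArg _ (by push_cast; omega)
  rcases hkey with hcase | hcase
  · -- x below ν_j : use k' < j, ν_j ⊆ ν_{k'}
    have hzz : (t k' : ℤ) - a k' + 1 + 2 * mk' = (t k : ℤ) - a k + 1 + 2 * mk := by
      exact_mod_cast ek'.symm.trans ek
    have h1 : (t k' : ℤ) - a k' ≤ (t j : ℤ) - a j := by omega
    have h2 : (t j : ℤ) + a j ≤ (t k' : ℤ) + a k' := by omega
    have hpar : ∃ f : ℤ, ((t j : ℤ) - a j) - ((t k' : ℤ) - a k') = 2 * f :=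
      ⟨uj - uk' - (a j : ℤ) + (a k' : ℤ), by omega⟩
    have hsubset : ∀ y ∈ nu t a j, y ∈ nuLt t a j := by
      intro y hy
      simp only [nuLt, Multiset.mem_sum]
      exact ⟨k', Finset.mem_Icc.mpr hk'mem, nu_mono t a j k' h1 h2 hpar y hy⟩
    have hcard : Multiset.card ((nu t a j).filter (fun y => y ∈ nuLt t a j)) = a j := by
      rw [Multiset.filter_eq_self.mpr hsubset, hcardnj]
    have hle := hnv.2.2.1
    omega
  · -- x above ν_j : use k > j, ν_j ⊆ ν_k
    have h1 : (t k : ℤ) - a k ≤ (t j : ℤ) - a j := by omega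
    have h2 : (t j : ℤ) + a j ≤ (t k : ℤ) + a k := by omega
    have hpar : ∃ f : ℤ, ((t j : ℤ) - a j) - ((t k : ℤ) - a k) = 2 * f := ⟨e, by omega⟩
    have hsubset : ∀ y ∈ nu t a j, y ∈ nuGt t a r j := by
      intro y hy
      simp only [nuGt, Multiset.mem_sum]
      exact ⟨k, Finset.mem_Icc.mpr hkmem, nu_mono t a j k h1 h2 hpar y hy⟩
    have hcard : Multiset.card ((nu t a j).filter (fun y => y ∈ nuGt t a r j)) = a j := by
      rw [Multiset.filter_eq_self.mpr hsubset, hcardnj]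
    have hle := hnv.2.2.2
    omega
end

section
/- Let p, q ≥ 1, N = p + q, and let (t_i, a_i)_{i=1}^r be a good parameter satisfying the nonvanishing condition, such that every rational occurs at most twice in ν, the number of elements of ν_j lying in ν_{<j} is strictly less than q_j, and the number of elements of ν_j lying in ν_{>j} is strictly less than p_j. Write ν_j = {ν_{j,1} > … > ν_{j,a_j}}, and let σ_1 > … > σ_{N − a_j} be the elements of ν_{<j} ⊔ ν_{>j} (which is multiplicity-free under these hypotheses) in decreasing order. Let i_0 be the MINIMAL integer with 1 ≤ i_0 ≤ a_j and a_j − i_0 + 1 + #{x ∈ ν_{<j} ⊔ ν_{>j} : x > ν_{j,i_0}} = p. Define λ = (λ_1, …, λ_N) by: λ_i = σ_i − (p−q+1)/2 + i for i < p − a_j + i_0; λ_i = ν_{j,1} + (N+1)/2 − a_j for p − a_j + i_0 ≤ i ≤ p; λ_i = ν_{j,1} − (N−1)/2 for p+1 ≤ i ≤ p + i_0 − 1; and λ_i = σ_{i − a_j} − (N+1)/2 − p + i for i ≥ p + i_0. Then λ ∈ ℤ^N with λ_1 ≥ … ≥ λ_p and λ_{p+1} ≥ … ≥ λ_N, and P(λ)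 ⊔ Q(λ) = ν as multisets. -/
open Finset

/-!
Write `θ = ν_{j,i₀}` and let `c` be the number of `σ_m` above `θ`, so that `p = c + (a_j − i₀ + 1)`.
The entries of `P(λ)` are then `σ_1 > ⋯ > σ_c > θ > ⋯ > ν_{j,a_j}` and those of `Q(λ)` are
`ν_{j,1} > ⋯ > ν_{j,i₀−1} > σ_{c+1} > ⋯ > σ_{N−a_j}`; together they exhaust
`ν = (ν_{<j} ⊔ ν_{>j}) ⊔ ν_j`. Consecutive entries of `P(λ)` (and of `Q(λ)`) differ by
`λ_i − λ_{i+1} + 1`, so their strict decrease is the dominance of `λ`. Integrality comes from the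
parity condition of a good parameter, which puts every element of `ν` in `ℤ + (N + 1)/2`.
-/

theorem Finset.Icc_one_val_map {α : Type*} (n : ℕ) (g : ℕ → α) :
    (Icc 1 n).val.map g = (Multiset.range n).map (fun k => g (k + 1)) := by
  rw [← Ico_add_one_right_eq_Icc, ← zero_add 1, ← map_add_right_Ico, map_val, ← range_eq_Ico,
    range_val, Multiset.map_map]
  rfl

theorem Multiset.map_range_reflect {α : Type*} (n : ℕ) (g : ℕ → α) :
    (Multiset.range n).map (fun k => g (n - 1 - k)) = (Multiset.range n).map g := by
  have hrefl : (Multiset.range n).map (fun k => n - 1 - k) = Multiset.range n := by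
    rw [← range_val, ← image_val_of_injOn, range_image_pred_top_sub]
    intro x hx y hy h
    simp only [Finset.mem_coe, Finset.mem_range] at hx hy h
    omega
  calc (Multiset.range n).map (fun k => g (n - 1 - k))
      = ((Multiset.range n).map (fun k => n - 1 - k)).map g := (Multiset.map_map _ _ _).symm
    _ = (Multiset.range n).map g := by rw [hrefl]

theorem Finset.filter_Icc_one_eq_Icc_card {M : ℕ} {P : ℕ → Prop} [DecidablePred P]
    (hP : ∀ k m, 1 ≤ k → k ≤ m → m ≤ M → P m → P k) :
    (Icc 1 M).filter P = Icc 1 ((Icc 1 M).filter P).card := by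
  refine eq_of_subset_of_card_le (fun m hm => ?_) (by simp)
  obtain ⟨hmM, hPm⟩ := mem_filter.mp hm
  rw [mem_Icc] at hmM ⊢
  have hsub : Icc 1 m ⊆ (Icc 1 M).filter P := fun k hk => by
    rw [mem_Icc] at hk
    exact mem_filter.mpr ⟨mem_Icc.mpr ⟨hk.1, hk.2.trans hmM.2⟩, hP k m hk.1 hk.2 hmM.2 hPm⟩
  exact ⟨hmM.1, by simpa using card_le_card hsub⟩

theorem StrictAntiOn.lt_iff_le_card_filter {β : Type*} [LinearOrder β] {σ : ℕ → β} {M : ℕ}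
    (hσ : StrictAntiOn σ (Set.Icc 1 M)) (θ : β) {m : ℕ} (hm : m ∈ Icc 1 M) :
    θ < σ m ↔ m ≤ ((Icc 1 M).filter fun k => θ < σ k).card := by
  have hdown : ∀ k m, 1 ≤ k → k ≤ m → m ≤ M → θ < σ m → θ < σ k := fun k m hk hkm hmM h =>
    h.trans_le (hσ.antitoneOn ⟨hk, hkm.trans hmM⟩ ⟨hk.trans hkm, hmM⟩ hkm)
  have := congrArg (m ∈ ·) (filter_Icc_one_eq_Icc_card hdown)
  simp only [mem_filter, mem_Icc, eq_iff_iff] at this hm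
  simpa [hm] using this

theorem nu_eq_map_range (t : ℕ → ℤ) (a : ℕ → ℕ) (k : ℕ) :
    nu t a k = (Multiset.range (a k)).map (fun m : ℕ => ((t k : ℚ) - a k + 1) / 2 + m) := by
  simp [nu, Multiset.bind_singleton, Multiset.map_map]

theorem nu_eq_map_range_sub (t : ℕ → ℤ) (a : ℕ → ℕ) (k : ℕ) :
    nu t a k = (Multiset.range (a k)).map (fun m : ℕ => ((t k : ℚ) + a k - 1) / 2 - m) := by
  rw [nu_eq_map_range, ← Multiset.map_range_reflect]
  refine Multiset.map_congr rfl fun m hm => ?_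
  rw [Multiset.mem_range] at hm
  rw [Nat.cast_sub (by omega), Nat.cast_sub (by omega)]
  push_cast
  ring

theorem exists_int_add_half_of_mem_nu {t : ℕ → ℤ} {a : ℕ → ℕ} {k : ℕ} {n : ℤ}
    (heven : Even (t k + a k + n)) {x : ℚ} (hx : x ∈ nu t a k) :
    ∃ z : ℤ, x + ((n : ℚ) - 1) / 2 = z := by
  obtain ⟨w, hw⟩ := heven
  rw [nu_eq_map_range] at hx
  obtain ⟨m, -, rfl⟩ := Multiset.mem_map.mp hx
  refine ⟨w - a k + m, ?_⟩
  have hw' : (t k : ℚ) + a k + n = w + w := by exact_mod_cast hw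
  push_cast
  linarith

theorem GoodParam.exists_int_add_half_of_mem {p q r : ℕ} {t : ℕ → ℤ} {a : ℕ → ℕ}
    (hgp : GoodParam p q r t a) {x : ℚ} (hx : x ∈ nuAll t a r) :
    ∃ z : ℤ, x + ((p : ℚ) + q - 1) / 2 = z := by
  obtain ⟨k, hk, hxk⟩ := Multiset.mem_sum.mp hx
  have heven : Even (t k + a k + ((p + q : ℕ) : ℤ)) := by
    simpa only [Nat.cast_add, ← add_assoc] using hgp.heven k hk
  simpa using exists_int_add_half_of_mem_nu heven hxk

theorem GoodParam.a_le_add {p q r : ℕ} {t : ℕ → ℤ} {a : ℕ → ℕ} (hgp : GoodParam p q r t a)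
    {j : ℕ} (hj : j ∈ Icc 1 r) : a j ≤ p + q :=
  hgp.hsum ▸ single_le_sum (fun i _ => Nat.zero_le (a i)) hj

theorem nuAll_eq_add {t : ℕ → ℤ} {a : ℕ → ℕ} {r j : ℕ} (hj : 1 ≤ j) (hjr : j ≤ r) :
    nuAll t a r = nuLt t a j + nuGt t a r j + nu t a j := by
  obtain ⟨i, rfl⟩ : ∃ i, j = i + 1 := ⟨j - 1, by omega⟩
  have hIoc : ∀ n, Icc 1 n = Ioc 0 n := fun n => Icc_add_one_left_eq_Ioc 0 n
  rw [nuAll, nuLt, nuGt, Nat.add_sub_cancel, hIoc, hIoc, Icc_add_one_left_eq_Ioc,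
    ← sum_Ioc_consecutive _ (Nat.zero_le (i + 1)) hjr, sum_Ioc_succ_top (Nat.zero_le i)]
  abel

def pEntry (p q : ℕ) (lam : ℕ → ℤ) (i : ℕ) : ℚ :=
  (lam i : ℚ) - ((p : ℚ) + (q : ℚ) - 1) / 2 + ((p : ℚ) - (i : ℚ))

def qEntry (p q : ℕ) (lam : ℕ → ℤ) (i : ℕ) : ℚ :=
  (lam (p + i) : ℚ) + ((p : ℚ) + (q : ℚ) - 1) / 2 - ((i : ℚ) - 1)

theorem Pms_eq_map_pEntry (p q : ℕ) (lam : ℕ → ℤ) :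
    Pms p q lam = (Icc 1 p).val.map (pEntry p q lam) := rfl

theorem Qms_eq_map_qEntry (p q : ℕ) (lam : ℕ → ℤ) :
    Qms p q lam = (Icc 1 q).val.map (qEntry p q lam) := rfl

theorem dominant_of_entries_succ_lt {p q : ℕ} {lam : ℕ → ℤ}
    (hP : ∀ i, 1 ≤ i → i < p → pEntry p q lam (i + 1) < pEntry p q lam i)
    (hQ : ∀ i, 1 ≤ i → i < q → qEntry p q lam (i + 1) < qEntry p q lam i) :
    Dominant p q lam := by
  refine ⟨fun i h1 h2 => ?_, fun i h1 h2 => ?_⟩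
  · have h := hP i h1 h2
    simp only [pEntry] at h
    push_cast at h
    have : (lam (i + 1) : ℚ) < lam i + 1 := by linarith
    exact Int.lt_add_one_iff.mp (by exact_mod_cast this)
  · obtain ⟨k, rfl⟩ : ∃ k, i = p + k := ⟨i - p, by omega⟩
    have h := hQ k (by omega) (by omega)
    simp only [qEntry] at h
    push_cast at h
    have : (lam (p + k + 1) : ℚ) < lam (p + k) + 1 := by rw [add_assoc]; linarith
    exact Int.lt_add_one_iff.mp (by exact_mod_cast this)

section Construction

-- `T` plays the role of `ν_{j,1}` and `A` that of `a_j`, so `T − (i₀ − 1) = ν_{j,i₀}`.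
variable (σ : ℕ → ℚ) (T : ℚ) (c i0 : ℕ)

def pSeq (i : ℕ) : ℚ :=
  if i ≤ c then σ i else T - ((i0 : ℚ) - 1) - ((i : ℚ) - (c + 1))

def qSeq (k : ℕ) : ℚ :=
  if k < i0 then T - ((k : ℚ) - 1) else σ (c + 1 + (k - i0))

def weightFormula (p q A : ℕ) (i : ℕ) : ℚ :=
  if (i : ℤ) < (p : ℤ) - (A : ℤ) + (i0 : ℤ) then
    σ i - ((p : ℚ) - (q : ℚ) + 1) / 2 + (i : ℚ)
  else if i ≤ p then
    T + ((p : ℚ) + (q : ℚ) + 1) / 2 - (A : ℚ)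
  else if i ≤ p + i0 - 1 then
    T - ((p : ℚ) + (q : ℚ) - 1) / 2
  else
    σ (i - A) - ((p : ℚ) + (q : ℚ) + 1) / 2 - (p : ℚ) + (i : ℚ)

variable {σ T c i0}

theorem pSeq_succ_lt {M : ℕ} (hσ : StrictAntiOn σ (Set.Icc 1 M))
    (hθ : ∀ m ∈ Icc 1 M, T - ((i0 : ℚ) - 1) < σ m ↔ m ≤ c) (hcM : c ≤ M) {i : ℕ} (hi : 1 ≤ i) :
    pSeq σ T c i0 (i + 1) < pSeq σ T c i0 i := by
  unfold pSeq
  rcases lt_trichotomy (i + 1) (c + 1) with h | h | h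
  · rw [if_pos (by omega), if_pos (by omega)]
    exact hσ ⟨hi, by omega⟩ ⟨by omega, by omega⟩ (by omega)
  · rw [if_neg (by omega), if_pos (by omega), show i = c by omega]
    have := (hθ c (mem_Icc.mpr ⟨by omega, hcM⟩)).mpr le_rfl
    push_cast
    linarith
  · rw [if_neg (by omega), if_neg (by omega)]
    push_cast
    linarith

theorem qSeq_succ_lt {M q : ℕ} (hσ : StrictAntiOn σ (Set.Icc 1 M))
    (hθ : ∀ m ∈ Icc 1 M, T - ((i0 : ℚ) - 1) < σ m ↔ m ≤ c) (hM : M + i0 = c + 1 + q)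
    {k : ℕ} (hkq : k < q) :
    qSeq σ T c i0 (k + 1) < qSeq σ T c i0 k := by
  unfold qSeq
  rcases lt_trichotomy (k + 1) i0 with h | h | h
  · rw [if_pos h, if_pos (by omega)]
    push_cast
    linarith
  · rw [if_neg (by omega), if_pos (by omega), show k + 1 - i0 = 0 by omega, add_zero]
    have := (hθ (c + 1) (mem_Icc.mpr ⟨by omega, by omega⟩)).not.mpr (by omega)
    have hk' : (k : ℚ) + 1 = i0 := by exact_mod_cast h
    linarith
  · rw [if_neg (by omega), if_neg (by omega),
      show c + 1 + (k + 1 - i0) = c + 1 + (k - i0) + 1 by omega]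
    exact hσ ⟨by omega, by omega⟩ ⟨by omega, by omega⟩ (by omega)

variable {p q A : ℕ}

theorem weightFormula_eq_pSeq (hc : p + i0 = A + 1 + c) {i : ℕ} (hi : i ≤ p) :
    weightFormula σ T i0 p q A i = pSeq σ T c i0 i + ((p : ℚ) + q - 1) / 2 - (p - i) := by
  have hc' : (p : ℚ) + i0 = A + 1 + c := by exact_mod_cast hc
  unfold weightFormula pSeq
  by_cases hic : i ≤ c
  · rw [if_pos (by omega), if_pos hic]
    ring
  · rw [if_neg (by omega), if_pos hi, if_neg hic]
    linarith

theorem weightFormula_add_eq_qSeq (hc : p + i0 = A + 1 + c) (hi0A : i0 ≤ A) {k : ℕ}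
    (hk : 1 ≤ k) :
    weightFormula σ T i0 p q A (p + k) = qSeq σ T c i0 k - ((p : ℚ) + q - 1) / 2 + (k - 1) := by
  unfold weightFormula qSeq
  rw [if_neg (by omega), if_neg (by omega)]
  by_cases hki : k < i0
  · rw [if_pos (by omega), if_pos hki]
    ring
  · rw [if_neg (by omega), if_neg hki, show p + k - A = c + 1 + (k - i0) by omega]
    push_cast
    ring

theorem map_pSeq_add_map_qSeq {M : ℕ} (hi0 : 1 ≤ i0) (hi0A : i0 ≤ A) (hcM : c ≤ M)
    (hc : p + i0 = A + 1 + c) (hM : M + A = p + q) :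
    (Icc 1 p).val.map (pSeq σ T c i0) + (Icc 1 q).val.map (qSeq σ T c i0) =
      (Icc 1 M).val.map σ + (Multiset.range A).map (fun m : ℕ => T - m) := by
  obtain ⟨d, rfl⟩ : ∃ d, p = c + d := ⟨p - c, by omega⟩
  obtain ⟨e, rfl⟩ : ∃ e, M = c + e := ⟨M - c, by omega⟩
  rw [show q = (i0 - 1) + e by omega, show A = (i0 - 1) + d by omega]
  simp only [Icc_one_val_map, Multiset.range_add, Multiset.map_add, Multiset.map_map,
    Function.comp_def]
  have h1 : (Multiset.range c).map (fun k => pSeq σ T c i0 (k + 1)) =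
      (Multiset.range c).map (fun k => σ (k + 1)) :=
    Multiset.map_congr rfl fun k hk => if_pos (by simp at hk; omega)
  have h2 : (Multiset.range d).map (fun k => pSeq σ T c i0 (c + k + 1)) =
      (Multiset.range d).map (fun k => T - ((i0 - 1 + k : ℕ) : ℚ)) := by
    refine Multiset.map_congr rfl fun k _ => ?_
    rw [pSeq, if_neg (by omega)]
    push_cast [Nat.cast_sub hi0]
    ring
  have h3 : (Multiset.range (i0 - 1)).map (fun k => qSeq σ T c i0 (k + 1)) =
      (Multiset.range (i0 - 1)).map (fun k : ℕ => T - k) := by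
    refine Multiset.map_congr rfl fun k hk => ?_
    rw [Multiset.mem_range] at hk
    rw [qSeq, if_pos (by omega)]
    push_cast
    ring
  have h4 : (Multiset.range e).map (fun k => qSeq σ T c i0 (i0 - 1 + k + 1)) =
      (Multiset.range e).map (fun k => σ (c + k + 1)) :=
    Multiset.map_congr rfl fun k _ => by rw [qSeq, if_neg (by omega)]; congr 1; omega
  rw [h1, h2, h3, h4]
  abel

theorem exists_int_weightFormula_eq (hc : p + i0 = A + 1 + c) (hi0A : i0 ≤ A)
    (hint : ∀ x ∈ (Icc 1 p).val.map (pSeq σ T c i0) + (Icc 1 q).val.map (qSeq σ T c i0),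
      ∃ z : ℤ, x + ((p : ℚ) + q - 1) / 2 = z)
    {i : ℕ} (h1 : 1 ≤ i) (h2 : i ≤ p + q) : ∃ z : ℤ, weightFormula σ T i0 p q A i = z := by
  by_cases hip : i ≤ p
  · obtain ⟨z, hz⟩ := hint (pSeq σ T c i0 i) (Multiset.mem_add.mpr <| Or.inl <|
      Multiset.mem_map_of_mem _ (mem_val.mpr (mem_Icc.mpr ⟨h1, hip⟩)))
    refine ⟨z - p + i, ?_⟩
    rw [weightFormula_eq_pSeq hc hip]
    push_cast
    linarith
  · obtain ⟨k, rfl⟩ : ∃ k, i = p + k := ⟨i - p, by omega⟩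
    obtain ⟨z, hz⟩ := hint (qSeq σ T c i0 k) (Multiset.mem_add.mpr <| Or.inr <|
      Multiset.mem_map_of_mem _ (mem_val.mpr (mem_Icc.mpr ⟨by omega, by omega⟩)))
    refine ⟨z - p - q + k, ?_⟩
    rw [weightFormula_add_eq_qSeq hc hi0A (by omega)]
    push_cast
    linarith

variable {lam : ℕ → ℤ}

theorem pEntry_eq_pSeq (hc : p + i0 = A + 1 + c)
    (hlam : ∀ i, 1 ≤ i → i ≤ p + q → (lam i : ℚ) = weightFormula σ T i0 p q A i)
    {i : ℕ} (h1 : 1 ≤ i) (hip : i ≤ p) : pEntry p q lam i = pSeq σ T c i0 i := by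
  rw [pEntry, hlam i h1 (by omega), weightFormula_eq_pSeq hc hip]
  ring

theorem qEntry_eq_qSeq (hc : p + i0 = A + 1 + c) (hi0A : i0 ≤ A)
    (hlam : ∀ i, 1 ≤ i → i ≤ p + q → (lam i : ℚ) = weightFormula σ T i0 p q A i)
    {k : ℕ} (h1 : 1 ≤ k) (hkq : k ≤ q) : qEntry p q lam k = qSeq σ T c i0 k := by
  rw [qEntry, hlam (p + k) (by omega) (by omega), weightFormula_add_eq_qSeq hc hi0A h1]
  ring

theorem Pms_add_Qms_eq_map_pSeq_add_map_qSeq (hc : p + i0 = A + 1 + c) (hi0A : i0 ≤ A)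
    (hlam : ∀ i, 1 ≤ i → i ≤ p + q → (lam i : ℚ) = weightFormula σ T i0 p q A i) :
    Pms p q lam + Qms p q lam =
      (Icc 1 p).val.map (pSeq σ T c i0) + (Icc 1 q).val.map (qSeq σ T c i0) := by
  rw [Pms_eq_map_pEntry, Qms_eq_map_qEntry]
  congr 1 <;> refine Multiset.map_congr rfl fun i hi => ?_ <;> rw [mem_val, mem_Icc] at hi
  · exact pEntry_eq_pSeq hc hlam hi.1 hi.2
  · exact qEntry_eq_qSeq hc hi0A hlam hi.1 hi.2

theorem exists_dominant_weight {M : ℕ} (hσ : StrictAntiOn σ (Set.Icc 1 M))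
    (hθ : ∀ m ∈ Icc 1 M, T - ((i0 : ℚ) - 1) < σ m ↔ m ≤ c) (hcM : c ≤ M)
    (hc : p + i0 = A + 1 + c) (hM : M + A = p + q) (hi0A : i0 ≤ A)
    (hint : ∀ x ∈ (Icc 1 p).val.map (pSeq σ T c i0) + (Icc 1 q).val.map (qSeq σ T c i0),
      ∃ z : ℤ, x + ((p : ℚ) + q - 1) / 2 = z) :
    ∃ lam : ℕ → ℤ, (∀ i, 1 ≤ i → i ≤ p + q → (lam i : ℚ) = weightFormula σ T i0 p q A i) ∧
      Dominant p q lam ∧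
      Pms p q lam + Qms p q lam =
        (Icc 1 p).val.map (pSeq σ T c i0) + (Icc 1 q).val.map (qSeq σ T c i0) := by
  have hlam : ∀ i, 1 ≤ i → i ≤ p + q →
      ((⌊weightFormula σ T i0 p q A i⌋ : ℤ) : ℚ) = weightFormula σ T i0 p q A i := by
    intro i h1 h2
    obtain ⟨z, hz⟩ := exists_int_weightFormula_eq hc hi0A hint h1 h2
    rw [hz, Int.floor_intCast]
  refine ⟨fun i => ⌊weightFormula σ T i0 p q A i⌋, hlam,
    dominant_of_entries_succ_lt (fun i h1 h2 => ?_) (fun k _ hk => ?_),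
    Pms_add_Qms_eq_map_pSeq_add_map_qSeq hc hi0A hlam⟩
  · rw [pEntry_eq_pSeq hc hlam (by omega) (by omega), pEntry_eq_pSeq hc hlam h1 h2.le]
    exact pSeq_succ_lt hσ hθ hcM h1
  · rw [qEntry_eq_qSeq hc hi0A hlam (by omega) (by omega),
      qEntry_eq_qSeq hc hi0A hlam (by omega) hk.le]
    exact qSeq_succ_lt hσ hθ (by omega) hk

end Construction

theorem statement14_general (p q r j i0 : ℕ) (t : ℕ → ℤ) (a : ℕ → ℕ)
    (hgp : GoodParam p q r t a) (hj : LeastJ p r a j)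
    (σ : ℕ → ℚ)
    (hσdec : ∀ i, 1 ≤ i → i < p + q - a j → σ (i + 1) < σ i)
    (hσ : nuLt t a j + nuGt t a r j = (Finset.Icc 1 (p + q - a j)).val.map σ)
    (hi01 : 1 ≤ i0) (hi0a : i0 ≤ a j)
    (hi0prop : a j - i0 + 1 + Multiset.card ((nuLt t a j + nuGt t a r j).filter
      (fun x => ((t j : ℚ) + (a j : ℚ) - 1) / 2 - ((i0 : ℚ) - 1) < x)) = p) :
    (nuLt t a j + nuGt t a r j).Nodup ∧
    ∃ lam : ℕ → ℤ,
      (∀ i, 1 ≤ i → i ≤ p + q → (lam i : ℚ) =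
        (if (i : ℤ) < (p : ℤ) - (a j : ℤ) + (i0 : ℤ) then
          σ i - ((p : ℚ) - (q : ℚ) + 1) / 2 + (i : ℚ)
        else if i ≤ p then
          ((t j : ℚ) + (a j : ℚ) - 1) / 2 + ((p : ℚ) + (q : ℚ) + 1) / 2 - (a j : ℚ)
        else if i ≤ p + i0 - 1 then
          ((t j : ℚ) + (a j : ℚ) - 1) / 2 - ((p : ℚ) + (q : ℚ) - 1) / 2
        else
          σ (i - a j) - ((p : ℚ) + (q : ℚ) + 1) / 2 - (p : ℚ) + (i : ℚ))) ∧
      Dominant p q lam ∧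
      Pms p q lam + Qms p q lam = nuAll t a r := by
  set T : ℚ := ((t j : ℚ) + a j - 1) / 2
  set M := p + q - a j
  have hAM : M + a j = p + q := by
    have := hgp.a_le_add (mem_Icc.mpr ⟨hj.h1, hj.hle⟩)
    omega
  have hσanti : StrictAntiOn σ (Set.Icc 1 M) :=
    strictAntiOn_of_add_one_lt Set.ordConnected_Icc fun i _ hi hi1 => hσdec i hi.1 hi1.2
  set c := ((Icc 1 M).filter fun m => T - ((i0 : ℚ) - 1) < σ m).card
  have hθ : ∀ m ∈ Icc 1 M, T - ((i0 : ℚ) - 1) < σ m ↔ m ≤ c :=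
    fun m hm => hσanti.lt_iff_le_card_filter _ hm
  have hcM : c ≤ M := (card_filter_le _ _).trans (by simp)
  have hc : p + i0 = a j + 1 + c := by
    rw [hσ, Multiset.filter_map, Multiset.card_map] at hi0prop
    change a j - i0 + 1 + c = p at hi0prop
    omega
  have hν : (Icc 1 p).val.map (pSeq σ T c i0) + (Icc 1 q).val.map (qSeq σ T c i0) =
      nuAll t a r := by
    rw [nuAll_eq_add hj.h1 hj.hle, hσ, nu_eq_map_range_sub,
      map_pSeq_add_map_qSeq hi01 hi0a hcM hc hAM]
  obtain ⟨lam, hlam, hdom, hPQ⟩ := exists_dominant_weight hσanti hθ hcM hc hAM hi0a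
    fun x hx => hgp.exists_int_add_half_of_mem (hν ▸ hx)
  refine ⟨hσ ▸ (Icc 1 M).nodup.map_on fun x hx y hy =>
    hσanti.injOn (by simpa using hx) (by simpa using hy), lam, hlam, hdom, hPQ.trans hν⟩

/-- under nonvanishing, multiplicity at most two in `ν`, and the strict
inequalities `#(ν_j ∩ ν_{<j}) < q_j`, `#(ν_j ∩ ν_{>j}) < p_j`, the multiset
`ν_{<j} ⊔ ν_{>j}` is multiplicity free, and, with `σ_1 > … > σ_{N−a_j}` its elements in
decreasing order and `i_0` minimal with `1 ≤ i_0 ≤ a_j` and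
`a_j − i_0 + 1 + #{x ∈ ν_{<j} ⊔ ν_{>j} : x > ν_{j,i_0}} = p`, the prescribed tuple `λ`
is integral, dominant, and satisfies `P(λ) ⊔ Q(λ) = ν`. -/
theorem statement14 (p q r j i0 : ℕ) (hp : 1 ≤ p) (hq : 1 ≤ q) (t : ℕ → ℤ) (a : ℕ → ℕ)
    (hgp : GoodParam p q r t a) (hj : LeastJ p r a j)
    (hnv : NonVanishing p q r t a j)
    (hmult : ∀ x : ℚ, Multiset.count x (nuAll t a r) ≤ 2)
    (hltstrict : Multiset.card ((nu t a j).filter (fun x => x ∈ nuLt t a j)) < qj q r a j)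
    (hgtstrict : Multiset.card ((nu t a j).filter (fun x => x ∈ nuGt t a r j)) < pj p a j)
    (σ : ℕ → ℚ)
    (hσdec : ∀ i, 1 ≤ i → i < p + q - a j → σ (i + 1) < σ i)
    (hσ : nuLt t a j + nuGt t a r j = (Finset.Icc 1 (p + q - a j)).val.map σ)
    (hi01 : 1 ≤ i0) (hi0a : i0 ≤ a j)
    (hi0prop : a j - i0 + 1 + Multiset.card ((nuLt t a j + nuGt t a r j).filter
      (fun x => ((t j : ℚ) + (a j : ℚ) - 1) / 2 - ((i0 : ℚ) - 1) < x)) = p)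
    (hi0min : ∀ i, 1 ≤ i → i < i0 →
      a j - i + 1 + Multiset.card ((nuLt t a j + nuGt t a r j).filter
        (fun x => ((t j : ℚ) + (a j : ℚ) - 1) / 2 - ((i : ℚ) - 1) < x)) ≠ p) :
    (nuLt t a j + nuGt t a r j).Nodup ∧
    ∃ lam : ℕ → ℤ,
      (∀ i, 1 ≤ i → i ≤ p + q → (lam i : ℚ) =
        (if (i : ℤ) < (p : ℤ) - (a j : ℤ) + (i0 : ℤ) then
          σ i - ((p : ℚ) - (q : ℚ) + 1) / 2 + (i : ℚ)
        else if i ≤ p then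
          ((t j : ℚ) + (a j : ℚ) - 1) / 2 + ((p : ℚ) + (q : ℚ) + 1) / 2 - (a j : ℚ)
        else if i ≤ p + i0 - 1 then
          ((t j : ℚ) + (a j : ℚ) - 1) / 2 - ((p : ℚ) + (q : ℚ) - 1) / 2
        else
          σ (i - a j) - ((p : ℚ) + (q : ℚ) + 1) / 2 - (p : ℚ) + (i : ℚ))) ∧
      Dominant p q lam ∧
      Pms p q lam + Qms p q lam = nuAll t a r :=
  statement14_general p q r j i0 t a hgp hj σ hσdec hσ hi01 hi0a hi0prop
end
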